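/- arXiv:1904.08391 — 6 statements merged into one kernel-verified Lean document; each statement's English description precedes it below -/
import Mathlib

section
/- Let P and Q be probability distributions on {0,1}^m. Then d_{TV}(P,Q) ≤ d_G(P,Q) ≤ √(2·ln 2·m) · d_{TV}(P,Q), where d_G is the subgaussian distance and d_{TV} the total variation distance. -/
open scoped BigOperators

/-- A probability mass function on a finite set. -/
def IsPMF {X : Type*} [Fintype X] (P : X → ℝ) : Prop :=
  (∀ x, 0 ≤ P x) ∧ ∑ x, P x = 1

/-- `f : {0,1}^m → ℝ` is a subgaussian test function: `f(U_m)` is mean-zero and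
subgaussian with parameter `1/2`. -/
def SubgTest (m : ℕ) (f : (Fin m → Bool) → ℝ) : Prop :=
  (∑ x, ((2 : ℝ) ^ m)⁻¹ * f x) = 0 ∧
  ∀ t : ℝ, Real.log (∑ x, ((2 : ℝ) ^ m)⁻¹ * Real.exp (t * f x)) ≤ t ^ 2 / 8

/-- The subgaussian distance between distributions on `{0,1}^m`. -/
noncomputable def dG (m : ℕ) (P Q : (Fin m → Bool) → ℝ) : ℝ :=
  sSup {r : ℝ | ∃ f, SubgTest m f ∧ r = ∑ x, (P x - Q x) * f x}

/-- Total variation distance. -/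
noncomputable def dTV (m : ℕ) (P Q : (Fin m → Bool) → ℝ) : ℝ :=
  (1 / 2) * ∑ x, |P x - Q x|

/-! Lower bound: for `A = {P ≥ Q}`, the centred indicator `1_A - U_m(A)` takes values in an
interval of length `1`, so by Hoeffding's lemma it is subgaussian with parameter `1/2`; paired
with `P - Q` it gives exactly `d_TV(P, Q)`.
Upper bound: the point `x` alone has mass `2^{-m}` under `U_m`, so the MGF bound at
`t = 4 f(x)` gives `f(x)^2 ≤ m log 2 / 2`; then `∑ (P - Q) f ≤ ‖P - Q‖₁ ‖f‖_∞`. -/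

open MeasureTheory ProbabilityTheory Real

section Finite

variable {α : Type*} [Fintype α]

lemma integral_uniformOn_univ [MeasurableSpace α] [MeasurableSingletonClass α] (g : α → ℝ) :
    ∫ x, g x ∂uniformOn Set.univ = ∑ x, (Fintype.card α : ℝ)⁻¹ * g x := by
  rw [integral_fintype .of_finite]
  congr 1 with x
  simp [measureReal_def, uniformOn_univ, ENNReal.toReal_inv]

lemma sum_mul_indicator_nonneg_sub_eq_half_sum_abs {d : α → ℝ} (hd : ∑ x, d x = 0) (c : ℝ) :
    ∑ x, d x * ({y | 0 ≤ d y}.indicator 1 x - c) = (1 / 2) * ∑ x, |d x| := by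
  have hpt : ∀ x, d x * ({y | 0 ≤ d y}.indicator 1 x - c) = (|d x| + d x) / 2 - c * d x := by
    intro x
    by_cases h : 0 ≤ d x
    · rw [Set.indicator_of_mem (show x ∈ {y | 0 ≤ d y} from h), Pi.one_apply, abs_of_nonneg h]
      ring
    · rw [Set.indicator_of_notMem (show x ∉ {y | 0 ≤ d y} from h), abs_of_neg (not_le.mp h)]
      ring
  simp only [hpt, Finset.sum_sub_distrib, ← Finset.sum_div, Finset.sum_add_distrib,
    ← Finset.mul_sum, hd]
  ring

lemma sum_mul_le_sum_abs_mul {d f : α → ℝ} {B : ℝ} (hf : ∀ x, |f x| ≤ B) :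
    ∑ x, d x * f x ≤ (∑ x, |d x|) * B := by
  rw [Finset.sum_mul]
  refine Finset.sum_le_sum fun x _ => ?_
  calc d x * f x ≤ |d x| * |f x| := abs_mul (d x) (f x) ▸ le_abs_self _
    _ ≤ |d x| * B := mul_le_mul_of_nonneg_left (hf x) (abs_nonneg _)

end Finite

lemma sq_le_of_forall_mul_exp_le {w a c : ℝ} (hw : 0 < w) (hc : 0 < c)
    (h : ∀ t, w * exp (t * a) ≤ exp (c * t ^ 2 / 2)) : a ^ 2 ≤ 2 * c * log w⁻¹ := by
  have hlog := log_le_log (by positivity) (h (a / c))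
  rw [log_mul hw.ne' (exp_pos _).ne', log_exp, log_exp] at hlog
  have hquad : a / c * a - c * (a / c) ^ 2 / 2 = a ^ 2 / (2 * c) := by field_simp; ring
  rw [log_inv, ← div_le_iff₀' (by positivity)]
  linarith

section Cube

variable {m : ℕ}

lemma sum_uniform_weight_eq_integral (g : (Fin m → Bool) → ℝ) :
    ∑ x, ((2 : ℝ) ^ m)⁻¹ * g x = ∫ x, g x ∂uniformOn Set.univ := by
  simp [integral_uniformOn_univ]

lemma subgTest_of_hasSubgaussianMGF {f : (Fin m → Bool) → ℝ}
    (h0 : ∫ x, f x ∂uniformOn Set.univ = 0)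
    (hf : HasSubgaussianMGF f (1 / 4) (uniformOn Set.univ)) : SubgTest m f := by
  refine ⟨by rwa [sum_uniform_weight_eq_integral], fun t => ?_⟩
  rw [sum_uniform_weight_eq_integral]
  change log (mgf f _ t) ≤ _
  rw [log_le_iff_le_exp (mgf_pos (hf.integrable_exp_mul t))]
  convert hf.mgf_le t using 2
  push_cast
  ring

lemma subgTest_indicator_sub_integral (A : Set (Fin m → Bool)) :
    SubgTest m (fun x => A.indicator 1 x - ∫ y, A.indicator 1 y ∂uniformOn Set.univ) := by
  have hA : ∀ x, A.indicator (1 : (Fin m → Bool) → ℝ) x ∈ Set.Icc 0 1 := fun x => by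
    by_cases hx : x ∈ A <;> simp [hx]
  apply subgTest_of_hasSubgaussianMGF
  · rw [integral_sub .of_finite .of_finite]
    simp
  · convert hasSubgaussianMGF_of_mem_Icc (μ := uniformOn Set.univ)
      (measurable_of_finite _).aemeasurable (Filter.Eventually.of_forall hA)
    norm_num

lemma SubgTest.abs_le {f : (Fin m → Bool) → ℝ} (hf : SubgTest m f) (x : Fin m → Bool) :
    |f x| ≤ √(2 * log 2 * m) / 2 := by
  have hmgf : ∀ t, ((2 : ℝ) ^ m)⁻¹ * exp (t * f x) ≤ exp ((1 / 4) * t ^ 2 / 2) := by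
    intro t
    have hsum := hf.2 t
    rw [log_le_iff_le_exp (by positivity)] at hsum
    calc ((2 : ℝ) ^ m)⁻¹ * exp (t * f x) ≤ ∑ y, ((2 : ℝ) ^ m)⁻¹ * exp (t * f y) :=
          Finset.single_le_sum (f := fun y => ((2 : ℝ) ^ m)⁻¹ * exp (t * f y))
            (fun y _ => by positivity) (Finset.mem_univ x)
      _ ≤ exp ((1 / 4) * t ^ 2 / 2) := by convert hsum using 2; ring
  have hsq := sq_le_of_forall_mul_exp_le (by positivity) (by norm_num) hmgf
  rw [inv_inv, log_pow] at hsq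
  have h2f : |2 * f x| ≤ √(2 * log 2 * m) := abs_le_sqrt (by nlinarith)
  rw [abs_mul, abs_two] at h2f
  linarith

end Cube

theorem tv_le_dG_le_sqrt_m_tv (m : ℕ) (P Q : (Fin m → Bool) → ℝ)
    (hP : IsPMF P) (hQ : IsPMF Q) :
    dTV m P Q ≤ dG m P Q ∧
    dG m P Q ≤ Real.sqrt (2 * Real.log 2 * m) * dTV m P Q := by
  set S := {r : ℝ | ∃ f, SubgTest m f ∧ r = ∑ x, (P x - Q x) * f x}
  have hsum : ∑ x, (P x - Q x) = 0 := by
    rw [Finset.sum_sub_distrib, hP.2, hQ.2, sub_self]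
  have hmem : dTV m P Q ∈ S :=
    ⟨_, subgTest_indicator_sub_integral {x | 0 ≤ P x - Q x},
      (sum_mul_indicator_nonneg_sub_eq_half_sum_abs hsum _).symm⟩
  have hle : ∀ r ∈ S, r ≤ √(2 * log 2 * m) * dTV m P Q := by
    rintro r ⟨f, hf, rfl⟩
    have hpair := sum_mul_le_sum_abs_mul (d := fun x => P x - Q x) hf.abs_le
    rw [dTV]
    linarith
  exact ⟨le_csSup ⟨_, hle⟩ hmem, csSup_le ⟨_, hmem⟩ hle⟩
end

section
/- Let P and Q be distributions on {0,1}^m and α > 0. Then d_G(P,Q) ≤ 2^{mα/(1+α)} · √(1 + 1/α) · d_{ℓ_{1+α}}(P,Q), where d_G is the subgaussian distance and d_{ℓ_{1+α}}(P,Q) = (Σ_x |P(x)−Q(x)|^{1+α})^{1/(1+α)}. -/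
open scoped BigOperators

/-!
Hölder's inequality with exponents `1 + α` and `q = 1 + 1/α` bounds `E[f(P)] - E[f(Q)]` by
`‖P - Q‖_{1+α} · (∑ₓ |f x|^q)^{1/q}`, so it suffices to bound the `q`-th moment of a subgaussian
test function. Since `y^q ≤ q^q e^{y - q}`, every `|f x|^q` is at most a multiple of
`e^{t f x} + e^{-t f x}`; summing and using the moment generating function bound with
`t = 2√q` gives `∑ₓ |f x|^q ≤ 2^m √q^q`, whose `q`-th root is `2^{mα/(1+α)} √q`.
-/

open Real Finset

lemma rpow_le_mul_exp_sub {q s : ℝ} (hq : 0 < q) (hs : 0 ≤ s) :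
    s ^ q ≤ q ^ q * exp (s - q) := by
  rcases hs.eq_or_lt with rfl | hs
  · rw [zero_rpow hq.ne']
    positivity
  calc s ^ q = q ^ q * (s / q) ^ q := by
        rw [div_rpow hs.le hq.le, mul_div_cancel₀ _ (rpow_pos_of_pos hq q).ne']
    _ = q ^ q * exp (log (s / q) * q) := by rw [rpow_def_of_pos (div_pos hs hq)]
    _ ≤ q ^ q * exp ((s / q - 1) * q) := by
        gcongr
        exact log_le_sub_one_of_pos (div_pos hs hq)
    _ = q ^ q * exp (s - q) := by
        congr 2
        field_simp

lemma abs_rpow_le_mul_exp_add_exp {q t : ℝ} (hq : 0 < q) (ht : 0 < t) (y : ℝ) :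
    |y| ^ q ≤ (q / t) ^ q * exp (-q) * (exp (t * y) + exp (-(t * y))) := by
  have htq : 0 < t ^ q := rpow_pos_of_pos ht q
  have key : (t * |y|) ^ q ≤ q ^ q * exp (t * |y| - q) :=
    rpow_le_mul_exp_sub hq (by positivity)
  rw [mul_rpow ht.le (abs_nonneg y), sub_eq_neg_add, exp_add] at key
  rw [div_rpow hq.le ht.le]
  calc |y| ^ q ≤ q ^ q * (exp (-q) * exp (t * |y|)) / t ^ q := by
        rwa [le_div_iff₀' htq]
    _ ≤ q ^ q * (exp (-q) * (exp (t * y) + exp (-(t * y)))) / t ^ q := by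
        gcongr
        simpa only [abs_mul, abs_of_pos ht] using exp_abs_le (t * y)
    _ = _ := by ring

lemma sum_abs_rpow_le_of_sum_exp_mul_le {ι : Type*} [Fintype ι] {f : ι → ℝ} {C : ℝ}
    (hmgf : ∀ s, ∑ i, exp (s * f i) ≤ C * exp (s ^ 2 / 8)) {q : ℝ} (hq : 1 ≤ q) :
    ∑ i, |f i| ^ q ≤ C * √q ^ q := by
  have hq0 : 0 < q := one_pos.trans_le hq
  have hC : 0 ≤ C := by
    simpa using (sum_nonneg fun i _ ↦ (exp_pos (0 * f i)).le).trans (hmgf 0)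
  set t := 2 * √q with ht
  have ht0 : 0 < t := by positivity
  have hqt : q / t = √q / 2 := by
    rw [ht, div_eq_div_iff (by positivity) two_ne_zero]
    nlinarith [sq_sqrt hq0.le]
  have hmgf_t : ∀ s, s ^ 2 = t ^ 2 → ∑ i, exp (s * f i) ≤ C * exp (q / 2) := by
    intro s hs
    convert hmgf s using 3
    rw [hs, ht, mul_pow, sq_sqrt hq0.le]
    ring
  -- absorbs the constant left over from the choice `t = 2√q`
  have hconst : 2 * exp (-(q / 2)) ≤ 2 ^ q := by
    calc 2 * exp (-(q / 2)) ≤ 2 * 1 := by gcongr; exact exp_le_one_iff.2 (by linarith)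
      _ ≤ 2 ^ q := by simpa using self_le_rpow_of_one_le one_le_two hq
  calc ∑ i, |f i| ^ q
      ≤ ∑ i, (q / t) ^ q * exp (-q) * (exp (t * f i) + exp (-(t * f i))) :=
        sum_le_sum fun i _ ↦ abs_rpow_le_mul_exp_add_exp hq0 ht0 (f i)
    _ = (q / t) ^ q * exp (-q) * (∑ i, exp (t * f i) + ∑ i, exp (-t * f i)) := by
        rw [← sum_add_distrib, mul_sum]
        simp only [neg_mul]
    _ ≤ (q / t) ^ q * exp (-q) * (C * exp (q / 2) + C * exp (q / 2)) := by
        gcongr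
        · exact hmgf_t t rfl
        · exact hmgf_t (-t) (neg_sq t)
    _ = C * √q ^ q * (2 * exp (-(q / 2)) / 2 ^ q) := by
        rw [hqt, div_rpow (sqrt_nonneg q) zero_le_two,
          show -(q / 2) = -q + q / 2 by ring, exp_add]
        ring
    _ ≤ C * √q ^ q :=
        mul_le_of_le_one_right (by positivity) ((div_le_one (by positivity)).2 hconst)

namespace SubgTest

variable {m : ℕ} {f : (Fin m → Bool) → ℝ}

lemma sum_exp_mul_le (hf : SubgTest m f) (s : ℝ) :
    ∑ x, exp (s * f x) ≤ 2 ^ m * exp (s ^ 2 / 8) := by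
  have hpos : 0 < ∑ x, ((2 : ℝ) ^ m)⁻¹ * exp (s * f x) :=
    sum_pos (fun x _ ↦ by positivity) univ_nonempty
  have h := (log_le_iff_le_exp hpos).1 (hf.2 s)
  rwa [← mul_sum, inv_mul_le_iff₀ (by positivity)] at h

lemma sum_abs_rpow_rpow_inv_le (hf : SubgTest m f) {q : ℝ} (hq : 1 ≤ q) :
    (∑ x, |f x| ^ q) ^ (1 / q) ≤ 2 ^ (m / q) * √q := by
  have hq0 : 0 < q := one_pos.trans_le hq
  calc (∑ x, |f x| ^ q) ^ (1 / q) ≤ (2 ^ m * √q ^ q) ^ (1 / q) := by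
        gcongr
        exact sum_abs_rpow_le_of_sum_exp_mul_le hf.sum_exp_mul_le hq
    _ = 2 ^ (m / q) * √q := by
        rw [mul_rpow (by positivity) (by positivity), ← rpow_natCast, ← rpow_mul zero_le_two,
          ← rpow_mul (sqrt_nonneg q), mul_one_div, mul_one_div_cancel hq0.ne', rpow_one]

end SubgTest

theorem dG_le_lp_general (m : ℕ) (α : ℝ) (hα : 0 < α) (P Q : (Fin m → Bool) → ℝ) :
    dG m P Q ≤ (2 : ℝ) ^ ((m * α) / (1 + α)) * Real.sqrt (1 + 1 / α)
      * (∑ x, |P x - Q x| ^ (1 + α)) ^ (1 / (1 + α)) := by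
  have hq : 1 ≤ 1 + 1 / α := le_add_of_nonneg_right (by positivity)
  have hconj : (1 + α).HolderConjugate (1 + 1 / α) := by
    rw [holderConjugate_iff]
    refine ⟨by linarith, ?_⟩
    field_simp
    ring
  have hexp : m / (1 + 1 / α) = m * α / (1 + α) := by
    field_simp
    ring
  refine Real.sSup_le ?_ (by positivity)
  rintro _ ⟨f, hf, rfl⟩
  calc ∑ x, (P x - Q x) * f x
      ≤ (∑ x, |P x - Q x| ^ (1 + α)) ^ (1 / (1 + α))
          * (∑ x, |f x| ^ (1 + 1 / α)) ^ (1 / (1 + 1 / α)) :=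
        inner_le_Lp_mul_Lq _ _ _ hconj
    _ ≤ (∑ x, |P x - Q x| ^ (1 + α)) ^ (1 / (1 + α))
          * (2 ^ (m / (1 + 1 / α)) * √(1 + 1 / α)) := by
        gcongr
        exact hf.sum_abs_rpow_rpow_inv_le hq
    _ = _ := by
        rw [hexp]
        ring

theorem dG_le_lp (m : ℕ) (α : ℝ) (hα : 0 < α) (P Q : (Fin m → Bool) → ℝ)
    (hP : IsPMF P) (hQ : IsPMF Q) :
    dG m P Q ≤ (2 : ℝ) ^ ((m * α) / (1 + α)) * Real.sqrt (1 + 1 / α)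
      * (∑ x, |P x - Q x| ^ (1 + α)) ^ (1 / (1 + α)) :=
  dG_le_lp_general m α hα P Q
end

section
/- Let P be a probability distribution on {0,1}^m. Then the subgaussian distance to uniform satisfies d_G(P, U_m) ≤ √((ln 2 / 2) · KL(P‖U_m)), where KL(P‖U_m) = Σ_x P(x) log₂(P(x)/2^{−m}). -/
open scoped BigOperators

/-- KL divergence (in bits) from a distribution on `{0,1}^m` to uniform. -/
noncomputable def KLu (m : ℕ) (P : (Fin m → Bool) → ℝ) : ℝ :=
  ∑ x, P x * Real.logb 2 ((2 : ℝ) ^ m * P x)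

/-! The test function `t • f` is plugged into the Donsker–Varadhan inequality
`E_P[g] ≤ ln E_U[e^g] + ln 2 · KL(P‖U)`, which follows from Gibbs' inequality for the tilted
distribution `U e^g / E_U[e^g]`. For a subgaussian test `f` this gives
`t E_P[f] ≤ t²/8 + ln 2 · KL(P‖U)` for every `t`, and `t = 4 E_P[f]` yields the bound. -/

open Real

section Gibbs

variable {ι : Type*} [Fintype ι]

theorem sum_sub_sum_le_sum_mul_log_div {p r : ι → ℝ} (hp : ∀ x, 0 ≤ p x)
    (hr : ∀ x, 0 < r x) :
    ∑ x, p x - ∑ x, r x ≤ ∑ x, p x * log (p x / r x) := by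
  rw [← Finset.sum_sub_distrib]
  refine Finset.sum_le_sum fun x _ => ?_
  have h := self_sub_one_le_mul_log (div_nonneg (hp x) (hr x).le)
  have hrx := hr x
  calc p x - r x = r x * (p x / r x - 1) := by field_simp
    _ ≤ r x * (p x / r x * log (p x / r x)) := by gcongr
    _ = p x * log (p x / r x) := by field_simp

theorem sum_mul_le_log_sum_mul_exp_add {P q : ι → ℝ} (hP : IsPMF P) (hq : ∀ x, 0 < q x)
    (g : ι → ℝ) :
    ∑ x, P x * g x ≤ log (∑ x, q x * exp (g x)) + ∑ x, P x * log (P x / q x) := by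
  obtain ⟨hP0, hP1⟩ := hP
  have hne : (Finset.univ : Finset ι).Nonempty :=
    Finset.nonempty_of_sum_ne_zero (f := P) (by simp [hP1])
  set S := ∑ x, q x * exp (g x)
  have hS : 0 < S := Finset.sum_pos (fun x _ => by have := hq x; positivity) hne
  set r : ι → ℝ := fun x => q x * exp (g x) / S
  have hr : ∀ x, 0 < r x := fun x => by have := hq x; positivity
  have hr1 : ∑ x, r x = 1 := by simp only [r, ← Finset.sum_div]; exact div_self hS.ne'
  have hlog_tilt : ∀ x, P x * log (P x / r x) = P x * log (P x / q x) + P x * (log S - g x) := by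
    intro x
    rcases (hP0 x).eq_or_lt with h0 | hpos
    · simp [← h0]
    · have hqx := hq x
      have hrx := hr x
      have hqr : q x / r x = S / exp (g x) := by simp only [r]; field_simp
      rw [← mul_add, show P x / r x = P x / q x * (q x / r x) by field_simp,
        log_mul (by positivity) (by positivity), hqr, log_div hS.ne' (exp_pos _).ne', log_exp]
  have hgibbs := sum_sub_sum_le_sum_mul_log_div hP0 hr
  simp only [hlog_tilt, Finset.sum_add_distrib, mul_sub, Finset.sum_sub_distrib,
    ← Finset.sum_mul, hP1, hr1] at hgibbs
  linarith

end Gibbs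

theorem le_sqrt_of_forall_mul_le_mul_sq_add {a c D : ℝ} (hc : 0 < c)
    (h : ∀ t, t * a ≤ c * t ^ 2 + D) : a ≤ sqrt (4 * c * D) := by
  refine (le_abs_self a).trans (abs_le_sqrt ?_)
  have ht := h (a / (2 * c))
  have hval : a / (2 * c) * a - c * (a / (2 * c)) ^ 2 = a ^ 2 / (4 * c) := by field_simp; ring
  have hle : a ^ 2 / (4 * c) ≤ D := by linarith
  rwa [div_le_iff₀ (by positivity), mul_comm] at hle

theorem log_two_mul_KLu (m : ℕ) (P : (Fin m → Bool) → ℝ) :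
    log 2 * KLu m P = ∑ x, P x * log (P x / ((2 : ℝ) ^ m)⁻¹) := by
  rw [KLu, Finset.mul_sum]
  refine Finset.sum_congr rfl fun x _ => ?_
  rw [logb, div_inv_eq_mul, mul_comm (P x) (2 ^ m)]
  field_simp

theorem SubgTest.mul_sum_mul_le {m : ℕ} {f : (Fin m → Bool) → ℝ} (hf : SubgTest m f)
    {P : (Fin m → Bool) → ℝ} (hP : IsPMF P) (t : ℝ) :
    t * ∑ x, P x * f x ≤ 1 / 8 * t ^ 2 + log 2 * KLu m P := by
  have hDV := sum_mul_le_log_sum_mul_exp_add hP (q := fun _ => ((2 : ℝ) ^ m)⁻¹)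
    (fun _ => by positivity) (fun x => t * f x)
  rw [← log_two_mul_KLu] at hDV
  have hmix : ∑ x, P x * (t * f x) = t * ∑ x, P x * f x := by
    rw [Finset.mul_sum]; exact Finset.sum_congr rfl fun x _ => by ring
  linarith [hf.2 t]

theorem SubgTest.sum_sub_uniform_mul {m : ℕ} {f : (Fin m → Bool) → ℝ} (hf : SubgTest m f)
    (P : (Fin m → Bool) → ℝ) :
    ∑ x, (P x - ((2 : ℝ) ^ m)⁻¹) * f x = ∑ x, P x * f x := by
  simp only [sub_mul, Finset.sum_sub_distrib, hf.1, sub_zero]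

theorem dG_le_sqrt_kl (m : ℕ) (P : (Fin m → Bool) → ℝ) (hP : IsPMF P) :
    dG m P (fun _ => ((2 : ℝ) ^ m)⁻¹) ≤ Real.sqrt ((Real.log 2 / 2) * KLu m P) := by
  refine Real.sSup_le ?_ (sqrt_nonneg _)
  rintro _ ⟨f, hf, rfl⟩
  rw [hf.sum_sub_uniform_mul, show log 2 / 2 * KLu m P = 4 * (1 / 8) * (log 2 * KLu m P) by ring]
  exact le_sqrt_of_forall_mul_le_mul_sq_add (by norm_num) (hf.mul_sum_mul_le hP)
end

section
/- Let G be a D-regular graph on vertex set {0,1}^n with spectral expansion λ, and let Γ : {0,1}^n × [D] → {0,1}^n be a neighbor function of G. Then for every 0 ≤ k ≤ n, Γ is a (k, λ√(2^{−k}−2^{−n})) ℓ₂-extractor: for every distribution X on {0,1}^n with min-entropy at least k, d_{ℓ₂}(Γ(X, U_{[D]}), U_n) ≤ λ·√(2^{−k}−2^{−n}). -/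
open scoped BigOperators

/-- The random-walk (transition matrix) operator of the graph on `{0,1}^n`
given by the neighbor function `Γ` with degree `D`: applied to a mass function
`P`, it gives the mass function of `Γ(x, i)` for `x ∼ P` and `i` uniform. -/
noncomputable def walkOp (n D : ℕ) (Γ : (Fin n → Bool) → Fin D → (Fin n → Bool))
    (P : (Fin n → Bool) → ℝ) : (Fin n → Bool) → ℝ :=
  fun v => (D : ℝ)⁻¹ * ∑ u, ∑ i, if Γ u i = v then P u else 0

/-!
The mean-zero part `X - U` of the source is mapped by the walk to `M X - U`, since the walk of a
regular graph fixes the uniform distribution. The spectral bound therefore gives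
`‖M X - U‖₂ ≤ λ ‖X - U‖₂`, and `‖X - U‖₂² = ‖X‖₂² - 2^{-n}`, where the collision probability
`‖X‖₂² = ∑ X(x)²` is at most `max_x X(x) ≤ 2^{-k}`.
-/

namespace IsPMF

variable {V : Type*} [Fintype V] {P : V → ℝ}

theorem sum_sq_le_of_le (hP : IsPMF P) {p : ℝ} (hp : ∀ x, P x ≤ p) : ∑ x, P x ^ 2 ≤ p :=
  calc ∑ x, P x ^ 2 ≤ ∑ x, p * P x :=
        Finset.sum_le_sum fun x _ => by rw [sq]; exact mul_le_mul_of_nonneg_right (hp x) (hP.1 x)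
    _ = p := by rw [← Finset.mul_sum, hP.2, mul_one]

theorem card_ne_zero (hP : IsPMF P) : (Fintype.card V : ℝ) ≠ 0 := by
  intro hV
  have hempty : IsEmpty V := Fintype.card_eq_zero_iff.mp (by exact_mod_cast hV)
  simpa using hP.2

theorem sum_sub_uniform_eq_zero (hP : IsPMF P) :
    ∑ x, (P x - (Fintype.card V : ℝ)⁻¹) = 0 := by
  rw [Finset.sum_sub_distrib, hP.2, Finset.sum_const, Finset.card_univ, nsmul_eq_mul,
    mul_inv_cancel₀ hP.card_ne_zero, sub_self]

theorem sum_sq_sub_uniform (hP : IsPMF P) :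
    ∑ x, (P x - (Fintype.card V : ℝ)⁻¹) ^ 2 = ∑ x, P x ^ 2 - (Fintype.card V : ℝ)⁻¹ := by
  have hV := hP.card_ne_zero
  simp only [sub_sq, Finset.sum_add_distrib, Finset.sum_sub_distrib, ← Finset.sum_mul,
    ← Finset.mul_sum, hP.2, Finset.sum_const, Finset.card_univ, nsmul_eq_mul]
  field_simp
  ring

end IsPMF

section walkOp

variable {n D : ℕ} {Γ : (Fin n → Bool) → Fin D → (Fin n → Bool)}

theorem walkOp_sub (P Q : (Fin n → Bool) → ℝ) :
    walkOp n D Γ (P - Q) = walkOp n D Γ P - walkOp n D Γ Q := by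
  funext v
  simp only [walkOp, Pi.sub_apply, ← mul_sub, ← Finset.sum_sub_distrib]
  congr 1
  refine Finset.sum_congr rfl fun u _ => Finset.sum_congr rfl fun i _ => ?_
  split_ifs <;> simp

theorem walkOp_const (hD : 0 < D)
    (hreg : ∀ v, (Finset.univ.filter
      (fun p : (Fin n → Bool) × Fin D => Γ p.1 p.2 = v)).card = D) (c : ℝ) :
    walkOp n D Γ (fun _ => c) = fun _ => c := by
  funext v
  rw [walkOp, ← Fintype.sum_prod_type', ← Finset.sum_filter, Finset.sum_const, hreg v,
    nsmul_eq_mul, inv_mul_cancel_left₀ (by exact_mod_cast hD.ne')]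

end walkOp

theorem expander_l2_extractor_general (n D : ℕ) (hD : 0 < D)
    (Γ : (Fin n → Bool) → Fin D → (Fin n → Bool))
    (hreg : ∀ v, (Finset.univ.filter
      (fun p : (Fin n → Bool) × Fin D => Γ p.1 p.2 = v)).card = D)
    (lam : ℝ) (hlam : 0 ≤ lam)
    (hexp : ∀ f : (Fin n → Bool) → ℝ, (∑ v, f v) = 0 →
      Real.sqrt (∑ v, (walkOp n D Γ f v) ^ 2) ≤ lam * Real.sqrt (∑ v, (f v) ^ 2))
    (k : ℝ)
    (X : (Fin n → Bool) → ℝ) (hX : IsPMF X) (hmin : ∀ x, X x ≤ (2 : ℝ) ^ (-k)) :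
    Real.sqrt (∑ v, (walkOp n D Γ X v - ((2 : ℝ) ^ n)⁻¹) ^ 2)
      ≤ lam * Real.sqrt ((2 : ℝ) ^ (-k) - ((2 : ℝ) ^ n)⁻¹) := by
  set c : ℝ := (Fintype.card (Fin n → Bool) : ℝ)⁻¹
  have huniform : ((2 : ℝ) ^ n)⁻¹ = c := by simp [c]
  rw [huniform]
  have hwalk : walkOp n D Γ (X - fun _ => c) = walkOp n D Γ X - fun _ => c := by
    rw [walkOp_sub, walkOp_const hD hreg]
  calc Real.sqrt (∑ v, (walkOp n D Γ X v - c) ^ 2)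
      = Real.sqrt (∑ v, (walkOp n D Γ (X - fun _ => c) v) ^ 2) := by rw [hwalk]; rfl
    _ ≤ lam * Real.sqrt (∑ v, (X v - c) ^ 2) :=
        hexp (X - fun _ => c) hX.sum_sub_uniform_eq_zero
    _ = lam * Real.sqrt (∑ v, X v ^ 2 - c) := by rw [hX.sum_sq_sub_uniform]
    _ ≤ lam * Real.sqrt ((2 : ℝ) ^ (-k) - c) := by
        gcongr
        exact hX.sum_sq_le_of_le hmin

/-- Expander neighbor functions are `ℓ₂`-extractors: if `Γ` is the neighbor
function of a `D`-regular graph on `{0,1}^n` with spectral expansion `λ`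
(encoded by the contraction of `walkOp` on mean-zero vectors), then for every
source `X` of min-entropy at least `k`, the output distribution is within `ℓ₂`
distance `λ·√(2^{-k} - 2^{-n})` of uniform. -/
theorem expander_l2_extractor (n D : ℕ) (hD : 0 < D)
    (Γ : (Fin n → Bool) → Fin D → (Fin n → Bool))
    (hreg : ∀ v, (Finset.univ.filter
      (fun p : (Fin n → Bool) × Fin D => Γ p.1 p.2 = v)).card = D)
    (lam : ℝ) (hlam : 0 ≤ lam)
    (hexp : ∀ f : (Fin n → Bool) → ℝ, (∑ v, f v) = 0 →
      Real.sqrt (∑ v, (walkOp n D Γ f v) ^ 2) ≤ lam * Real.sqrt (∑ v, (f v) ^ 2))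
    (k : ℝ) (hk0 : 0 ≤ k) (hkn : k ≤ n)
    (X : (Fin n → Bool) → ℝ) (hX : IsPMF X) (hmin : ∀ x, X x ≤ (2 : ℝ) ^ (-k)) :
    Real.sqrt (∑ v, (walkOp n D Γ X v - ((2 : ℝ) ^ n)⁻¹) ^ 2)
      ≤ lam * Real.sqrt ((2 : ℝ) ^ (-k) - ((2 : ℝ) ^ n)⁻¹) :=
  expander_l2_extractor_general n D hD Γ hreg lam hlam hexp k X hX hmin
end

section
/- Let Ext : {0,1}^n × {0,1}^d → {0,1}^m be an (n − log₂(1/δ), ε) extractor for the weak divergence D^F induced by a class of test functions F : {0,1}^m → ℝ. Then Samp : {0,1}^n → ({0,1}^m)^D with D = 2^d, defined by Samp(x)_i = Ext(x, i), is a (δ, ε) averaging sampler for F: for every f ∈ F, Pr_{x∼U_n}[ (1/D)Σ_i f(Ext(x,i)) − E[f(U_m)] > ε ] ≤ δ. -/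
/-!
Suppose more than a `δ` fraction of the seeds `x` are bad for `f`, i.e. the empirical average of
`f` over the sample `Ext x ·` exceeds `E[f(U_m)]` by more than `ε`. The uniform distribution on
the bad seeds has min-entropy at least `n - log₂(1/δ)`, so the extractor property applies to it;
but the average of `f ∘ Ext` under it is an average of bad averages, hence exceeds the
mean by more than `ε`.
-/

open scoped BigOperators

open Finset

variable {α : Type*}

section UniformWeight

variable [DecidableEq α]

noncomputable def Finset.uniformWeight (s : Finset α) (x : α) : ℝ :=
  if x ∈ s then (#s : ℝ)⁻¹ else 0

lemma Finset.uniformWeight_le {s : Finset α} {c : ℝ} (hc : 0 < c) (hs : c ≤ #s) (x : α) :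
    s.uniformWeight x ≤ c⁻¹ := by
  unfold uniformWeight
  split
  · exact inv_anti₀ hc hs
  · positivity

variable [Fintype α]

lemma Finset.sum_uniformWeight_mul (s : Finset α) (g : α → ℝ) :
    ∑ x, s.uniformWeight x * g x = 𝔼 x ∈ s, g x := by
  simp only [uniformWeight, ite_mul, zero_mul, sum_ite_mem, univ_inter, expect_eq_sum_div_card,
    div_eq_inv_mul, mul_sum]

lemma Finset.isPMF_uniformWeight {s : Finset α} (hs : s.Nonempty) : IsPMF s.uniformWeight := by
  refine ⟨fun x => by unfold uniformWeight; split <;> positivity, ?_⟩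
  simpa [expect_const hs] using s.sum_uniformWeight_mul fun _ => 1

end UniformWeight

variable [Fintype α]

lemma IsPMF.sum_mul_sub_const {X g : α → ℝ} (hX : IsPMF X) (μ : ℝ) :
    ∑ x, X x * (g x - μ) = ∑ x, X x * g x - μ := by
  simp only [mul_sub, sum_sub_distrib, ← sum_mul, hX.2, one_mul]

lemma card_filter_lt_le_of_forall_isPMF {g : α → ℝ} {t c : ℝ} (hc : 0 < c)
    (h : ∀ X : α → ℝ, IsPMF X → (∀ x, X x ≤ c⁻¹) → ∑ x, X x * g x ≤ t) :
    (#{x | t < g x} : ℝ) ≤ c := by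
  classical
  set B : Finset α := {x | t < g x}
  by_contra! hB
  have hBne : B.Nonempty := card_pos.mp (by exact_mod_cast hc.trans hB)
  have hle := h B.uniformWeight (isPMF_uniformWeight hBne) (uniformWeight_le hc hB.le)
  rw [sum_uniformWeight_mul] at hle
  obtain ⟨x, hx⟩ := hBne
  have hlt : t < 𝔼 x ∈ B, g x :=
    lt_expect (fun y hy => (mem_filter.mp hy).2.le) ⟨x, hx, (mem_filter.mp hx).2⟩
  linarith

lemma two_rpow_neg_sub_logb_one_div {δ : ℝ} (hδ : 0 < δ) (n : ℕ) :
    (2 : ℝ) ^ (-((n : ℝ) - Real.logb 2 (1 / δ))) = (δ * 2 ^ n)⁻¹ := by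
  rw [neg_sub, Real.rpow_sub two_pos, Real.rpow_logb two_pos (by norm_num) (by positivity),
    Real.rpow_natCast]
  field_simp

/-- Extractors for the divergence induced by a class of test functions `F`
are averaging samplers for `F`. -/
theorem extractor_to_sampler (n d m : ℕ) (δ ε : ℝ) (hδ : 0 < δ)
    (F : Set ((Fin m → Bool) → ℝ))
    (Ext : (Fin n → Bool) → (Fin d → Bool) → (Fin m → Bool))
    (hExt : ∀ X : (Fin n → Bool) → ℝ, IsPMF X →
      (∀ x, X x ≤ (2 : ℝ) ^ (-((n : ℝ) - Real.logb 2 (1 / δ)))) →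
      ∀ f ∈ F,
        (∑ x, ∑ s, X x * ((2 : ℝ) ^ d)⁻¹ * f (Ext x s))
          - (∑ y, ((2 : ℝ) ^ m)⁻¹ * f y) ≤ ε) :
    ∀ f ∈ F,
      ((Finset.univ.filter (fun x : Fin n → Bool =>
          ε < (((2 : ℝ) ^ d)⁻¹ * ∑ s, f (Ext x s))
                - ∑ y, ((2 : ℝ) ^ m)⁻¹ * f y)).card : ℝ)
        ≤ δ * 2 ^ n := by
  intro f hf
  refine card_filter_lt_le_of_forall_isPMF (by positivity) fun X hX hXle => ?_
  rw [hX.sum_mul_sub_const]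
  convert hExt X hX (two_rpow_neg_sub_logb_one_div hδ n ▸ hXle) f hf using 2
  refine sum_congr rfl fun x _ => ?_
  rw [mul_sum, mul_sum]
  exact sum_congr rfl fun s _ => by ring
end

section
/- Let H be a collection of ε-almost universal hash functions from {0,1}^n to {0,1}^m (i.e., for all x ≠ y, Pr_{h∼H}[h(x)=h(y)] ≤ (1+ε)/2^m). Then for every joint distribution (Z,X) with H̃_∞(X|Z) ≥ m + log₂(1/ε), E_{z∼Z}[ D₂( (H, H(X|_{Z=z})) ‖ (U_H, U_m) ) ] ≤ (2/ln 2)·ε, where D₂ denotes the Rényi divergence of order 2 and (H, H(X)) is the distribution of (h, h(x)) for independent h ∼ uniform on H, x ∼ X. -/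
/-!
For a fixed value `z` of `Z`, let `p` be the conditional distribution of `X`. The argument of the
logarithm is `|H| · 2^m · cp(H, H(X))`. Expanding the collision probability over pairs `(x, x')`,
the diagonal contributes `2^m · cp(p) ≤ 2^m · max p` and, by almost universality, the off-diagonal
pairs contribute at most `1 + ε`. Instead of Jensen's inequality, `log₂ A ≤ (A - 1) / ln 2` is applied
for each `z`; averaging over `z`, the min-entropy hypothesis `∑_z max_x Pr[Z = z, X = x] ≤ ε / 2^m`
bounds the total by `2ε / ln 2`.
-/

open scoped BigOperators

open Finset

section HashFamily

variable {ι α β : Type*} [Fintype ι] [Fintype α] [Fintype β] [DecidableEq β]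

def IsAlmostUniversal (f : ι → α → β) (δ : ℝ) : Prop :=
  ∀ x x', x ≠ x' → (#(univ.filter fun i => f i x = f i x') : ℝ) ≤ δ * Fintype.card ι

/-- The collision probability of `(i, f i x)` for `i` uniform and `x ∼ p`. -/
noncomputable def hashCollisionProb (f : ι → α → β) (p : α → ℝ) : ℝ :=
  ∑ i, ∑ y, ((Fintype.card ι : ℝ)⁻¹ * ∑ x ∈ univ.filter (fun x => f i x = y), p x) ^ 2

lemma sum_sq_sum_fiber_eq (f : α → β) (p : α → ℝ) :
    ∑ y, (∑ x ∈ univ.filter (fun x => f x = y), p x) ^ 2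
      = ∑ x, ∑ x', if f x = f x' then p x * p x' else 0 := by
  simp only [sq, sum_filter, sum_mul_sum]
  rw [sum_comm]
  refine sum_congr rfl fun x _ => ?_
  rw [sum_comm]
  refine sum_congr rfl fun x' _ => ?_
  simp only [ite_mul, zero_mul, mul_ite, mul_zero, sum_ite_eq, mem_univ, if_true]

lemma sum_sum_sq_sum_fiber_le {f : ι → α → β} {δ : ℝ} (hδ : 0 ≤ δ)
    (hf : IsAlmostUniversal f δ) {p : α → ℝ} (hp : ∀ x, 0 ≤ p x) :
    ∑ i, ∑ y, (∑ x ∈ univ.filter (fun x => f i x = y), p x) ^ 2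
      ≤ Fintype.card ι * (∑ x, p x ^ 2 + δ * (∑ x, p x) ^ 2) := by
  classical
  set c : ℝ := (Fintype.card ι : ℝ)
  have hcoll : ∀ x x', (#(univ.filter fun i => f i x = f i x') : ℝ)
      ≤ c * ((if x = x' then 1 else 0) + δ) := by
    intro x x'
    by_cases hxx : x = x'
    · rw [if_pos hxx]
      calc (#(univ.filter fun i => f i x = f i x') : ℝ) ≤ c :=
            Nat.cast_le.mpr (card_le_univ _)
        _ ≤ c * (1 + δ) := le_mul_of_one_le_right (Nat.cast_nonneg _) (by linarith)
    · simpa [hxx, mul_comm] using hf x x' hxx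
  calc _ = ∑ x, ∑ x', (#(univ.filter fun i => f i x = f i x') : ℝ) * (p x * p x') := by
        simp only [sum_sq_sum_fiber_eq, natCast_card_filter, sum_mul, boole_mul]
        rw [sum_comm]
        exact sum_congr rfl fun x _ => sum_comm
    _ ≤ ∑ x, ∑ x', c * ((if x = x' then 1 else 0) + δ) * (p x * p x') := by
        gcongr with x _ x' _
        · exact mul_nonneg (hp x) (hp x')
        · exact hcoll x x'
    _ = _ := by
        simp only [mul_add, add_mul, sum_add_distrib, mul_ite, mul_one, mul_zero, ite_mul,
          zero_mul, sum_ite_eq, mem_univ, if_true]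
        rw [sq (∑ x, p x), sum_mul_sum]
        simp only [sq, mul_sum, mul_assoc]

lemma card_mul_mul_hashCollisionProb_le {f : ι → α → β} {K δ : ℝ} (hK : 0 ≤ K) (hδ : 0 ≤ δ)
    (hf : IsAlmostUniversal f δ) {p : α → ℝ} (hp : ∀ x, 0 ≤ p x) :
    Fintype.card ι * K * hashCollisionProb f p ≤ K * (∑ x, p x ^ 2 + δ * (∑ x, p x) ^ 2) := by
  set c : ℝ := (Fintype.card ι : ℝ)
  set B := ∑ x, p x ^ 2 + δ * (∑ x, p x) ^ 2
  have hB : 0 ≤ B := by positivity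
  calc _ = K * c⁻¹ * (c * c⁻¹) * ∑ i, ∑ y, (∑ x ∈ univ.filter (fun x => f i x = y), p x) ^ 2 := by
        simp only [hashCollisionProb, mul_pow, ← mul_sum]
        ring
    _ ≤ K * c⁻¹ * (c * c⁻¹) * (c * B) := by
        gcongr
        exact sum_sum_sq_sum_fiber_le hδ hf hp
    _ = K * (c * c⁻¹) ^ 2 * B := by ring
    _ ≤ K * 1 * B := by
        gcongr
        exact pow_le_one₀ (by positivity) mul_inv_le_one
    _ = K * B := by rw [mul_one]

end HashFamily

lemma logb_le_div_log_of_le_one_add {b A t : ℝ} (hb : 1 < b) (hA : 0 ≤ A) (ht : 0 ≤ t)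
    (h : A ≤ 1 + t) : Real.logb b A ≤ t / Real.log b := by
  have hlogb : 0 < Real.log b := Real.log_pos hb
  rcases hA.eq_or_lt with rfl | hA
  · rw [Real.logb_zero]
    positivity
  · rw [Real.logb]
    gcongr
    linarith [Real.log_le_sub_one_of_pos hA]

lemma rpow_neg_add_logb_one_div {b ε : ℝ} (hb : 0 < b) (hb1 : b ≠ 1) (hε : 0 < ε) (m : ℕ) :
    b ^ (-((m : ℝ) + Real.logb b (1 / ε))) = ε / b ^ m := by
  rw [neg_add, Real.rpow_add hb, Real.rpow_neg hb.le, Real.rpow_natCast, Real.rpow_neg hb.le,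
    Real.rpow_logb hb hb1 (by positivity)]
  field_simp

/-- `q` is an unnormalised distribution; for `q = Pr[Z = z, X = ·]` the left side is
`Pr[Z = z] · D₂((H, H(X|_{Z=z})) ‖ (U_H, U_m))` with `K = 2^m`. -/
lemma mul_logb_card_mul_mul_hashCollisionProb_le {ι α β : Type*} [Fintype ι] [Fintype α]
    [Nonempty α] [Fintype β] [DecidableEq β] {f : ι → α → β} {K ε : ℝ} (hK : 0 < K)
    (hε : 0 ≤ ε) (hf : IsAlmostUniversal f ((1 + ε) / K)) {q : α → ℝ} (hq : ∀ x, 0 ≤ q x) :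
    (∑ x, q x) * Real.logb 2 (Fintype.card ι * K * hashCollisionProb f fun x => q x / ∑ x', q x')
      ≤ (ε * ∑ x, q x + K * univ.sup' univ_nonempty q) / Real.log 2 := by
  set P := ∑ x, q x
  set S := univ.sup' univ_nonempty q
  have hlog2 : 0 < Real.log 2 := Real.log_pos one_lt_two
  have hS : 0 ≤ S := (hq (Classical.arbitrary α)).trans (le_sup' q (mem_univ _))
  have hP0 : 0 ≤ P := sum_nonneg fun x _ => hq x
  rcases hP0.eq_or_lt with hP | hP
  · rw [← hP, zero_mul]
    positivity
  set p := fun x => q x / P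
  have hp : ∀ x, 0 ≤ p x := fun x => div_nonneg (hq x) hP.le
  have hp1 : ∑ x, p x = 1 := by rw [← sum_div, div_self hP.ne']
  have hcp : ∑ x, p x ^ 2 ≤ S / P := calc
    ∑ x, p x ^ 2 ≤ ∑ x, S / P * p x := sum_le_sum fun x _ => by
        rw [sq]
        gcongr
        · exact hp x
        · exact div_le_div_of_nonneg_right (le_sup' q (mem_univ x)) hP.le
    _ = S / P := by rw [← mul_sum, hp1, mul_one]
  have hA := card_mul_mul_hashCollisionProb_le hK.le (by positivity) hf hp
  rw [hp1, one_pow, mul_one, mul_add, mul_div_cancel₀ _ hK.ne'] at hA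
  have hA0 : 0 ≤ Fintype.card ι * K * hashCollisionProb f p := by
    unfold hashCollisionProb
    positivity
  calc _ ≤ P * ((ε + K * (S / P)) / Real.log 2) := by
        gcongr
        refine logb_le_div_log_of_le_one_add one_lt_two hA0 (by positivity) ?_
        linarith [mul_le_mul_of_nonneg_left hcp hK.le]
    _ = _ := by
        field_simp [hP.ne']

theorem leftover_hash_lemma_general (n m : ℕ) (ε : ℝ) (hε : 0 < ε)
    (ι : Type) [Fintype ι]
    (h : ι → (Fin n → Bool) → (Fin m → Bool))
    (hUniv : ∀ x y : Fin n → Bool, x ≠ y →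
      ((Finset.univ.filter fun i : ι => h i x = h i y).card : ℝ)
        ≤ (1 + ε) / 2 ^ m * Fintype.card ι)
    (ζ : Type) [Fintype ζ]
    (J : ζ × (Fin n → Bool) → ℝ) (hJ : IsPMF J)
    (hHmin : ∑ z, (Finset.univ.sup' Finset.univ_nonempty fun x => J (z, x))
      ≤ (2 : ℝ) ^ (-((m : ℝ) + Real.logb 2 (1 / ε)))) :
    ∑ z, (∑ x, J (z, x)) *
        Real.logb 2 ((Fintype.card ι : ℝ) * 2 ^ m *
          ∑ i : ι, ∑ y : Fin m → Bool,
            ((Fintype.card ι : ℝ)⁻¹ *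
              ∑ x ∈ Finset.univ.filter (fun x : Fin n → Bool => h i x = y),
                J (z, x) / ∑ x', J (z, x')) ^ 2)
      ≤ (2 / Real.log 2) * ε := by
  obtain ⟨hJ0, hJ1⟩ := hJ
  have hmass : ∑ z, ∑ x, J (z, x) = 1 := by rw [← hJ1, Fintype.sum_prod_type]
  rw [rpow_neg_add_logb_one_div two_pos (by norm_num) hε] at hHmin
  calc _ ≤ ∑ z, (ε * ∑ x, J (z, x) + 2 ^ m * univ.sup' univ_nonempty fun x => J (z, x))
          / Real.log 2 :=
        sum_le_sum fun z _ => mul_logb_card_mul_mul_hashCollisionProb_le (by positivity) hε.le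
          hUniv fun x => hJ0 (z, x)
    _ = (ε * ∑ z, ∑ x, J (z, x) + 2 ^ m * ∑ z, univ.sup' univ_nonempty fun x => J (z, x))
          / Real.log 2 := by
        rw [← sum_div, sum_add_distrib, mul_sum, mul_sum]
    _ ≤ (ε * 1 + 2 ^ m * (ε / 2 ^ m)) / Real.log 2 := by
        rw [hmass]
        gcongr
    _ = 2 / Real.log 2 * ε := by
        field_simp
        ring

/-- The Leftover Hash Lemma for Rényi divergence of order 2: hashing with an
`ε`-almost universal family is an average-case `D₂`-extractor. -/
theorem leftover_hash_lemma (n m : ℕ) (ε : ℝ) (hε : 0 < ε)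
    (ι : Type) [Fintype ι] [Nonempty ι]
    (h : ι → (Fin n → Bool) → (Fin m → Bool))
    (hUniv : ∀ x y : Fin n → Bool, x ≠ y →
      ((Finset.univ.filter fun i : ι => h i x = h i y).card : ℝ)
        ≤ (1 + ε) / 2 ^ m * Fintype.card ι)
    (ζ : Type) [Fintype ζ]
    (J : ζ × (Fin n → Bool) → ℝ) (hJ : IsPMF J)
    (hHmin : ∑ z, (Finset.univ.sup' Finset.univ_nonempty fun x => J (z, x))
      ≤ (2 : ℝ) ^ (-((m : ℝ) + Real.logb 2 (1 / ε)))) :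
    ∑ z, (∑ x, J (z, x)) *
        Real.logb 2 ((Fintype.card ι : ℝ) * 2 ^ m *
          ∑ i : ι, ∑ y : Fin m → Bool,
            ((Fintype.card ι : ℝ)⁻¹ *
              ∑ x ∈ Finset.univ.filter (fun x : Fin n → Bool => h i x = y),
                J (z, x) / ∑ x', J (z, x')) ^ 2)
      ≤ (2 / Real.log 2) * ε :=
  leftover_hash_lemma_general n m ε hε ι h hUniv ζ J hJ hHmin
end
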